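/- Assume (HS1) and (HS2) hold, let c̄0 be a nonzero real number, and assume the triplet (G, P^−, P^+) satisfies alternative (a) of (HS3_r̄): the matrices −D_U G(P^−;r̄) and −D_U G(P^+;r̄) are positive definite. Then there exists λ* > 0 such that for every λ ∈ ℂ with Re λ > −λ*, every ρ ∈ [0,1], and every y ∈ ℝ, the d×d complex matrix Δ_{ρ;λ}(iy) = c̄0 i y I + 2τ A(y) − DG_ρ + λ I has nonzero determinant. -/

import Mathlib

open MeasureTheory Filter Topology

noncomputable section

/-- Vectors in `ℝ^d`. -/
abbrev Vec (d : ℕ) := Fin d → ℝ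

/-- Vectors in `ℂ^d`. -/
abbrev VecC (d : ℕ) := Fin d → ℂ

variable {d : ℕ}

/-- Euclidean dot product on `ℝ^d`. -/
def dotV {d : ℕ} (x y : Vec d) : ℝ := ∑ i, x i * y i

/-- The spatial mixed-difference operator `Δ₀` with (diagonal) coefficients `α` and constant `τ`:
`(Δ₀ F)(ξ) = τ Σ_{m>0} α_m [F(ξ+m) + F(ξ-m) - 2 F(ξ)]`. -/
def Δ0op {d : ℕ} (τ : ℝ) (α : ℕ → Vec d) (F : ℝ → Vec d) : ℝ → Vec d :=
  fun ξ i => τ * ∑' m : ℕ, α (m + 1) i *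
    (F (ξ + ((m : ℝ) + 1)) i + F (ξ - ((m : ℝ) + 1)) i - 2 * F ξ i)

/-- Complexification of `Δ₀`. -/
def Δ0opC {d : ℕ} (τ : ℝ) (α : ℕ → Vec d) (F : ℝ → VecC d) : ℝ → VecC d :=
  fun ξ i => (τ : ℂ) * ∑' m : ℕ, ((α (m + 1) i : ℝ) : ℂ) *
    (F (ξ + ((m : ℝ) + 1)) i + F (ξ - ((m : ℝ) + 1)) i - 2 * F ξ i)

/-- Assumption (HS1).  The matrices `α_m` are encoded by their diagonals `α m : ℝ^d`
(indexed so that `α (m+1)` is the coefficient `α_{m+1}`, `m ≥ 0`). -/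
structure HS1 (d ddiff : ℕ) (τ : ℝ) (α : ℕ → Vec d) (ν : ℝ) : Prop where
  τ_pos : 0 < τ
  ddiff_pos : 1 ≤ ddiff
  ddiff_le : ddiff ≤ d
  ν_pos : 0 < ν
  diff_nonzero : ∀ i : Fin d, (i : ℕ) < ddiff → ∃ m : ℕ, α (m + 1) i ≠ 0
  nondiff_zero : ∀ i : Fin d, ddiff ≤ (i : ℕ) → ∀ m : ℕ, α (m + 1) i = 0
  exp_summable : Summable (fun m : ℕ => ‖α (m + 1)‖ * Real.exp (((m : ℝ) + 1) * ν))
  second_moment : ∀ i : Fin d, (i : ℕ) < ddiff →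
    ∑' m : ℕ, α (m + 1) i * ((m : ℝ) + 1) ^ 2 = 1
  A_pos : ∀ i : Fin d, (i : ℕ) < ddiff → ∀ z : ℝ, 0 < z → z < 2 * Real.pi →
    0 < ∑' m : ℕ, α (m + 1) i * (1 - Real.cos (((m : ℝ) + 1) * z))

/-- Assumption (HS2): `G : ℝ^d × (0,1) → ℝ^d` is `C²` and `G(P^±; r) = 0` for all `r ∈ (0,1)`. -/
structure HS2 (d : ℕ) (G : Vec d → ℝ → Vec d) (Pm Pp : Vec d) : Prop where
  smooth : ContDiffOn ℝ 2 (fun z : Vec d × ℝ => G z.1 z.2) (Set.univ ×ˢ Set.Ioo (0:ℝ) 1)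
  zero_m : ∀ r ∈ Set.Ioo (0:ℝ) 1, G Pm r = 0
  zero_p : ∀ r ∈ Set.Ioo (0:ℝ) 1, G Pp r = 0

/-- The Jacobian `D_U G(U; r)` as a `d × d` matrix. -/
def DUG {d : ℕ} (G : Vec d → ℝ → Vec d) (U : Vec d) (r : ℝ) : Matrix (Fin d) (Fin d) ℝ :=
  fun i j => fderiv ℝ (fun V => G V r i) U (Pi.single j 1)

/-- A (not necessarily symmetric) real matrix is positive definite if `xᵀ M x > 0` for `x ≠ 0`. -/
def PosDefQ {d : ℕ} (M : Matrix (Fin d) (Fin d) ℝ) : Prop :=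
  ∀ x : Vec d, x ≠ 0 → 0 < dotV x (M.mulVec x)

/-- `x` is supported in the first `ddiff` coordinates. -/
def SuppFirst (d ddiff : ℕ) (x : Vec d) : Prop := ∀ i : Fin d, ddiff ≤ (i : ℕ) → x i = 0

/-- `x` is supported in the last `d - ddiff` coordinates. -/
def SuppLast (d ddiff : ℕ) (x : Vec d) : Prop := ∀ i : Fin d, (i : ℕ) < ddiff → x i = 0

/-- Alternative (a) of assumption (HS3). -/
def HS3a {d : ℕ} (G : Vec d → ℝ → Vec d) (Pm Pp : Vec d) (r : ℝ) : Prop :=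
  PosDefQ (-(DUG G Pm r)) ∧ PosDefQ (-(DUG G Pp r))

/-- Alternative (b) of assumption (HS3): the blocks `−G^{[1,1]}(P^±)` and `−G^{[2,2]}(P^±)` are
positive definite (expressed via vectors supported on the corresponding blocks) and
`G^{[1,2]}(U) = −Γ G^{[2,1]}(U)ᵀ` for some `Γ > 0`. -/
def HS3b {d : ℕ} (ddiff : ℕ) (G : Vec d → ℝ → Vec d) (Pm Pp : Vec d) (r : ℝ) : Prop :=
  (∀ P ∈ ({Pm, Pp} : Set (Vec d)),
    (∀ x : Vec d, x ≠ 0 → SuppFirst d ddiff x → 0 < dotV x ((-(DUG G P r)).mulVec x)) ∧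
    (∀ x : Vec d, x ≠ 0 → SuppLast d ddiff x → 0 < dotV x ((-(DUG G P r)).mulVec x))) ∧
  ∃ Γ : ℝ, 0 < Γ ∧ ∀ U : Vec d, ∀ i j : Fin d, (i : ℕ) < ddiff → ddiff ≤ (j : ℕ) →
    DUG G U r i j = -Γ * DUG G U r j i

/-- Assumption (HS3): one of the two alternatives holds. -/
def HS3 {d : ℕ} (ddiff : ℕ) (G : Vec d → ℝ → Vec d) (Pm Pp : Vec d) (r : ℝ) : Prop :=
  HS3a G Pm Pp r ∨ HS3b ddiff G Pm Pp r

/-- `F ∈ H¹(ℝ; ℝ^d)` with (a.e./weak) derivative `F'`: `F` is an indefinite integral of `F'`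
and both belong to `L²`. -/
structure IsH1 {d : ℕ} (F F' : ℝ → Vec d) : Prop where
  fund : ∀ a b : ℝ, F b - F a = ∫ t in a..b, F' t
  memF : MemLp F 2 volume
  memF' : MemLp F' 2 volume

/-- Complex version of `IsH1`. -/
structure IsH1C {d : ℕ} (F F' : ℝ → VecC d) : Prop where
  fund : ∀ a b : ℝ, F b - F a = ∫ t in a..b, F' t
  memF : MemLp F 2 volume
  memF' : MemLp F' 2 volume

/-- The `L²(ℝ;ℝ^d)` pairing. -/
def innerL2 {d : ℕ} (F G : ℝ → Vec d) : ℝ := ∫ ξ : ℝ, dotV (F ξ) (G ξ)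

/-- The operator `L₀ F = c̄₀ F' − Δ₀ F − D_U G(Ū₀(·); r̄) F`, evaluated on a pair `(F, F')`. -/
def L0op {d : ℕ} (τ c0 : ℝ) (α : ℕ → Vec d) (G : Vec d → ℝ → Vec d) (U0 : ℝ → Vec d)
    (r : ℝ) (F F' : ℝ → Vec d) : ℝ → Vec d :=
  fun ξ => c0 • F' ξ - Δ0op τ α F ξ - (DUG G (U0 ξ) r).mulVec (F ξ)

/-- The formal adjoint `L₀* F = −c̄₀ F' − Δ₀ F − D_U G(Ū₀(·); r̄)ᵀ F`. -/
def L0starop {d : ℕ} (τ c0 : ℝ) (α : ℕ → Vec d) (G : Vec d → ℝ → Vec d) (U0 : ℝ → Vec d)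
    (r : ℝ) (F F' : ℝ → Vec d) : ℝ → Vec d :=
  fun ξ => (-c0) • F' ξ - Δ0op τ α F ξ - (DUG G (U0 ξ) r).transpose.mulVec (F ξ)

/-- Complexification of `L₀ + λ`. -/
def L0opC {d : ℕ} (τ c0 : ℝ) (α : ℕ → Vec d) (G : Vec d → ℝ → Vec d) (U0 : ℝ → Vec d)
    (r : ℝ) (lam : ℂ) (F F' : ℝ → VecC d) : ℝ → VecC d :=
  fun ξ i => (c0 : ℂ) * F' ξ i - Δ0opC τ α F ξ i
    - ∑ j, ((DUG G (U0 ξ) r i j : ℝ) : ℂ) * F ξ j + lam * F ξ i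

/-- Bijectivity (in the a.e. sense) of the complexification of `L₀ + λ` from `H¹` to `L²`. -/
def L0CBijective {d : ℕ} (τ c0 : ℝ) (α : ℕ → Vec d) (G : Vec d → ℝ → Vec d)
    (U0 : ℝ → Vec d) (r : ℝ) (lam : ℂ) : Prop :=
  (∀ H : ℝ → VecC d, MemLp H 2 volume →
    ∃ F F' : ℝ → VecC d, IsH1C F F' ∧
      ∀ᵐ ξ ∂(volume : Measure ℝ), L0opC τ c0 α G U0 r lam F F' ξ = H ξ) ∧
  (∀ F F' : ℝ → VecC d, IsH1C F F' →
    (∀ᵐ ξ ∂(volume : Measure ℝ), L0opC τ c0 α G U0 r lam F F' ξ = 0) →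
    (∀ᵐ ξ ∂(volume : Measure ℝ), F ξ = 0))

/-- Assumption (HW1): existence of the travelling wave `(c̄₀, Ū₀)` for the LDE, with
`Ū₀' = U0'` its (continuous) derivative. -/
structure HW1 {d : ℕ} (τ : ℝ) (α : ℕ → Vec d) (G : Vec d → ℝ → Vec d) (Pm Pp : Vec d)
    (r c0 : ℝ) (U0 U0' : ℝ → Vec d) : Prop where
  c0_ne : c0 ≠ 0
  deriv : ∀ ξ : ℝ, HasDerivAt U0 (U0' ξ) ξ
  cont_deriv : Continuous U0'
  bounded : ∃ C : ℝ, ∀ ξ : ℝ, ‖U0 ξ‖ ≤ C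
  eqn : ∀ ξ : ℝ, c0 • U0' ξ = Δ0op τ α U0 ξ + G (U0 ξ) r
  lim_p : Tendsto U0 atTop (nhds Pp)
  lim_m : Tendsto U0 atBot (nhds Pm)

/-- Assumption (HW2): the spectral stability assumption on `L₀`. -/
structure HW2 {d : ℕ} (τ c0 : ℝ) (α : ℕ → Vec d) (G : Vec d → ℝ → Vec d)
    (U0 U0' : ℝ → Vec d) (r : ℝ) (Φp Φp' Φm Φm' : ℝ → Vec d) (lamT : ℝ) : Prop where
  lamT_pos : 0 < lamT
  h1p : IsH1 Φp Φp'
  h1m : IsH1 Φm Φm'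
  eq_deriv : Φp = U0'
  normalisation : innerL2 Φp Φm = 1
  spec : ∀ lam : ℂ, -lamT ≤ lam.re →
    (L0CBijective τ c0 α G U0 r lam ↔
      ¬ ∃ m : ℤ, lam = 2 * Real.pi * Complex.I * c0 * m)
  eig : ∀ lam : ℂ, (∃ m : ℤ, lam = 2 * Real.pi * Complex.I * c0 * m) →
    ∃ F F' : ℝ → VecC d, IsH1C F F' ∧ ¬ (∀ᵐ ξ ∂(volume : Measure ℝ), F ξ = 0) ∧
      ∀ᵐ ξ ∂(volume : Measure ℝ), L0opC τ c0 α G U0 r lam F F' ξ = 0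
  kerL0 : ∀ F F' : ℝ → Vec d, IsH1 F F' →
    ((∀ᵐ ξ ∂(volume : Measure ℝ), L0op τ c0 α G U0 r F F' ξ = 0) ↔
      ∃ c : ℝ, ∀ᵐ ξ ∂(volume : Measure ℝ), F ξ = c • Φp ξ)
  kerL0star : ∀ F F' : ℝ → Vec d, IsH1 F F' →
    ((∀ᵐ ξ ∂(volume : Measure ℝ), L0starop τ c0 α G U0 r F F' ξ = 0) ↔
      ∃ c : ℝ, ∀ᵐ ξ ∂(volume : Measure ℝ), F ξ = c • Φm ξ)
  kerL0_perp : ∀ g : ℝ → Vec d, MemLp g 2 volume →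
    ((∀ F F' : ℝ → Vec d, IsH1 F F' → innerL2 g (L0starop τ c0 α G U0 r F F') = 0) ↔
      ∃ c : ℝ, ∀ᵐ ξ ∂(volume : Measure ℝ), g ξ = c • Φp ξ)
  kerL0star_perp : ∀ g : ℝ → Vec d, MemLp g 2 volume →
    ((∀ F F' : ℝ → Vec d, IsH1 F F' → innerL2 g (L0op τ c0 α G U0 r F F') = 0) ↔
      ∃ c : ℝ, ∀ᵐ ξ ∂(volume : Measure ℝ), g ξ = c • Φm ξ)

/-! ### Exponentially weighted spaces `BC_{-η}` -/

/-- Membership in `BC_{-η}(ℝ;ℝ^d)`: continuous with `sup_ξ e^{η|ξ|}‖F(ξ)‖ < ∞`. -/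
def MemBC {d : ℕ} (η : ℝ) (F : ℝ → Vec d) : Prop :=
  Continuous F ∧ BddAbove (Set.range fun ξ : ℝ => Real.exp (η * |ξ|) * ‖F ξ‖)

/-- The `BC_{-η}` norm `sup_ξ e^{η|ξ|}‖F(ξ)‖`. -/
def BCnorm {d : ℕ} (η : ℝ) (F : ℝ → Vec d) : ℝ := ⨆ ξ : ℝ, Real.exp (η * |ξ|) * ‖F ξ‖

/-- Membership in `BC¹_{-η}(ℝ;ℝ^d)` of `F` with derivative `F'`. -/
def MemBC1 {d : ℕ} (η : ℝ) (F F' : ℝ → Vec d) : Prop :=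
  (∀ ξ : ℝ, HasDerivAt F (F' ξ) ξ) ∧ Continuous F' ∧
  BddAbove (Set.range fun ξ : ℝ => Real.exp (η * |ξ|) * (‖F ξ‖ + ‖F' ξ‖))

/-- The `BC¹_{-η}` norm `sup_ξ e^{η|ξ|}(‖F(ξ)‖ + ‖F'(ξ)‖)`. -/
def BC1norm {d : ℕ} (η : ℝ) (F F' : ℝ → Vec d) : ℝ :=
  ⨆ ξ : ℝ, Real.exp (η * |ξ|) * (‖F ξ‖ + ‖F' ξ‖)

/-! ### BDF coefficients -/

/-- Backward difference `(∂v)(n) = v(n) − v(n−1)`. -/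
def bdiff (v : ℤ → ℝ) : ℤ → ℝ := fun n => v n - v (n - 1)

/-- `(μ, β)` are the order-`k` BDF coefficients: for every scalar sequence `v`,
`Σ_{n=0}^k μ_n v(n−k) = Σ_{n'=1}^k (∂^{n'} v)(0)`, and `β = Σ_{n=1}^k n μ_n`. -/
def BDFcoeff (k : ℕ) (μ : ℕ → ℝ) (β : ℝ) : Prop :=
  (∀ v : ℤ → ℝ, ∑ n ∈ Finset.range (k + 1), μ n * v ((n : ℤ) - (k : ℤ))
      = ∑ n' ∈ Finset.Icc 1 k, (bdiff^[n'] v) 0) ∧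
  β = ∑ n ∈ Finset.Icc 1 k, (n : ℝ) * μ n

/-! ### The grid space `𝒴_M` (functions on `p⁻¹ℤ`, indexed by `ℤ`) -/

/-- Inner product on `𝒴_M = ℓ²_p(ℝ^d)`: `⟨V,W⟩ = p⁻¹ Σ_{j∈ℤ} ⟨V_j, W_j⟩`. -/
def innerY {d : ℕ} (p : ℕ) (V W : ℤ → Vec d) : ℝ := ((p : ℝ))⁻¹ * ∑' j : ℤ, dotV (V j) (W j)

/-- Membership in `𝒴_M = ℓ²_p(ℝ^d)`. -/
def MemY {d : ℕ} (V : ℤ → Vec d) : Prop := Summable fun j : ℤ => dotV (V j) (V j)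

/-- Norm on `𝒴_M`. -/
def normY {d : ℕ} (p : ℕ) (V : ℤ → Vec d) : ℝ := Real.sqrt (innerY p V V)

/-- Norm on `𝒴¹_{k,M}` (with `DV` the discrete derivative of `V`). -/
def normY1 {d : ℕ} (p : ℕ) (V DV : ℤ → Vec d) : ℝ :=
  Real.sqrt (innerY p V V + innerY p DV DV)

/-- The discrete BDF derivative `D_{k,M}` on the grid `p⁻¹ℤ` (a shift by `M⁻¹` is `q` grid
steps, with `M = p/q`). -/
def DkY {d : ℕ} (k : ℕ) (μ : ℕ → ℝ) (β M : ℝ) (q : ℕ) (V : ℤ → Vec d) : ℤ → Vec d :=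
  fun j => β⁻¹ • M • ∑ n' ∈ Finset.range (k + 1), μ n' • V (j - ((k : ℤ) - (n' : ℤ)) * q)

/-- The operator `Δ₀` on the grid `p⁻¹ℤ` (a shift by `m ∈ ℤ_{>0}` is `m·p` grid steps). -/
def Δ0Y {d : ℕ} (τ : ℝ) (α : ℕ → Vec d) (p : ℕ) (V : ℤ → Vec d) : ℤ → Vec d :=
  fun j i => τ * ∑' m : ℕ, α (m + 1) i *
    (V (j + ((m : ℤ) + 1) * p) i + V (j - ((m : ℤ) + 1) * p) i - 2 * V j i)

/-- The linearised fully discrete operator `L_{k,M} : 𝒴¹_{k,M} → 𝒴_M`. -/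
def LkMop {d : ℕ} (τ c0 : ℝ) (α : ℕ → Vec d) (G : Vec d → ℝ → Vec d) (U0 : ℝ → Vec d)
    (r : ℝ) (k : ℕ) (μ : ℕ → ℝ) (β : ℝ) (p q : ℕ) (V : ℤ → Vec d) : ℤ → Vec d :=
  fun j => c0 • DkY k μ β ((p : ℝ) / q) q V j - Δ0Y τ α p V j
    - (DUG G (U0 ((j : ℝ) / p)) r).mulVec (V j)

/-- Restriction of a continuum function to the grid `p⁻¹ℤ`. -/
def restrY {d : ℕ} (p : ℕ) (f : ℝ → Vec d) : ℤ → Vec d := fun j => f ((j : ℝ) / p)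

/-! ### The spaces `ℓ²_{q,⊥}`, `ℋ_M` and the associated operators -/

/-- The `ℓ²_{q,⊥}` inner product on maps `q⁻¹{0,…,q} → ℝ^d` (indexed by `Fin (q+1)`). -/
def innerPerp {d : ℕ} (q : ℕ) (Φ Ψ : Fin (q + 1) → Vec d) : ℝ :=
  (q : ℝ)⁻¹ * ((1 / 2) * dotV (Φ 0) (Ψ 0) + (1 / 2) * dotV (Φ (Fin.last q)) (Ψ (Fin.last q))
    + ∑ ζ ∈ Finset.Ioo (0 : Fin (q + 1)) (Fin.last q), dotV (Φ ζ) (Ψ ζ))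

/-- Index reduction `ℤ → Fin (q+1)` by the representative in `{0,…,q−1}`. -/
def zmodIdx (q : ℕ) (hq : 0 < q) (j : ℤ) : Fin (q + 1) :=
  ⟨(j % (q : ℤ)).toNat, by
    have h2 : j % (q : ℤ) < (q : ℤ) := Int.emod_lt_of_pos j (by exact_mod_cast hq)
    have h1 : 0 ≤ j % (q : ℤ) := Int.emod_nonneg j (by exact_mod_cast hq.ne')
    omega⟩

/-- Extension of an element of `ℋ_M` to all `ζ ∈ q⁻¹ℤ` via the convention
`Φ(ζ±1, ξ) = Φ(ζ, ξ±M⁻¹)`; here `j` is the `ζ`-index in units of `q⁻¹` and `l` the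
`ξ`-index in units of `M⁻¹`. -/
def extH {d : ℕ} (q : ℕ) (hq : 0 < q) (Φ : Fin (q + 1) → ℤ → Vec d) : ℤ → ℤ → Vec d :=
  fun j l => Φ (zmodIdx q hq j) (l + j / (q : ℤ))

/-- The compatibility constraint for `ℋ_M`: `Φ(1,ξ) = Φ(0, ξ + M⁻¹)`. -/
def HConstraint {d : ℕ} (q : ℕ) (Φ : Fin (q + 1) → ℤ → Vec d) : Prop :=
  ∀ l : ℤ, Φ (Fin.last q) l = Φ 0 (l + 1)

/-- Inner product on `ℋ_M`. -/
def innerH {d : ℕ} (q : ℕ) (M : ℝ) (Φ Ψ : Fin (q + 1) → ℤ → Vec d) : ℝ :=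
  M⁻¹ * ∑' l : ℤ, innerPerp q (fun ζ => Φ ζ l) (fun ζ => Ψ ζ l)

/-- Membership in `ℋ_M`. -/
def MemH {d : ℕ} (q : ℕ) (Φ : Fin (q + 1) → ℤ → Vec d) : Prop :=
  Summable fun l : ℤ => innerPerp q (fun ζ => Φ ζ l) (fun ζ => Φ ζ l)

/-- Norm on `ℋ_M`. -/
def normH {d : ℕ} (q : ℕ) (M : ℝ) (Φ : Fin (q + 1) → ℤ → Vec d) : ℝ :=
  Real.sqrt (innerH q M Φ Φ)

/-- The BDF discrete derivative on `ℋ_M`, acting in the second variable. -/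
def DkH {d : ℕ} (q k : ℕ) (μ : ℕ → ℝ) (β M : ℝ) (Φ : Fin (q + 1) → ℤ → Vec d) :
    Fin (q + 1) → ℤ → Vec d :=
  fun ζ l => β⁻¹ • M • ∑ n' ∈ Finset.range (k + 1), μ n' • Φ ζ (l - ((k : ℤ) - (n' : ℤ)))

/-- The adjoint BDF discrete derivative on `ℋ_M`. -/
def DkHstar {d : ℕ} (q k : ℕ) (μ : ℕ → ℝ) (β M : ℝ) (Φ : Fin (q + 1) → ℤ → Vec d) :
    Fin (q + 1) → ℤ → Vec d :=
  fun ζ l => β⁻¹ • M • ∑ n' ∈ Finset.range (k + 1), μ n' • Φ ζ (l + ((k : ℤ) - (n' : ℤ)))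

/-- Norm on `ℋ¹_{k,M}`. -/
def normH1 {d : ℕ} (q k : ℕ) (μ : ℕ → ℝ) (β M : ℝ) (Φ : Fin (q + 1) → ℤ → Vec d) : ℝ :=
  Real.sqrt (innerH q M Φ Φ + innerH q M (DkH q k μ β M Φ) (DkH q k μ β M Φ))

/-- The operator `Δ_M` on `ℋ_M`, with twist data `t = θq ∈ {1,…,q}` and `n` satisfying
`p = nq + t`, i.e. `1 = (n+θ)M⁻¹`. -/
def ΔMop {d : ℕ} (q : ℕ) (hq : 0 < q) (τ : ℝ) (α : ℕ → Vec d) (t n : ℤ)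
    (Φ : Fin (q + 1) → ℤ → Vec d) : Fin (q + 1) → ℤ → Vec d :=
  fun ζ l i => τ * ∑' m : ℕ, α (m + 1) i *
    (extH q hq Φ (((ζ : ℕ) : ℤ) + ((m : ℤ) + 1) * t) (l + ((m : ℤ) + 1) * n) i
      + extH q hq Φ (((ζ : ℕ) : ℤ) - ((m : ℤ) + 1) * t) (l - ((m : ℤ) + 1) * n) i
      - 2 * Φ ζ l i)

/-- The fully discrete linearised operator `𝒦_{k,M} : ℋ¹_{k,M} → ℋ_M`. -/
def KkM {d : ℕ} (q : ℕ) (hq : 0 < q) (τ c0 : ℝ) (α : ℕ → Vec d) (G : Vec d → ℝ → Vec d)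
    (U0 : ℝ → Vec d) (r : ℝ) (k : ℕ) (μ : ℕ → ℝ) (β : ℝ) (p : ℕ) (t n : ℤ)
    (Φ : Fin (q + 1) → ℤ → Vec d) : Fin (q + 1) → ℤ → Vec d :=
  fun ζ l => c0 • DkH q k μ β ((p : ℝ) / q) Φ ζ l - ΔMop q hq τ α t n Φ ζ l
    - (DUG G (U0 (((l * (q : ℤ) + ((ζ : ℕ) : ℤ) : ℤ) : ℝ) / p)) r).mulVec (Φ ζ l)

/-- The adjoint fully discrete operator `𝒦*_{k,M}`. -/
def KkMstar {d : ℕ} (q : ℕ) (hq : 0 < q) (τ c0 : ℝ) (α : ℕ → Vec d) (G : Vec d → ℝ → Vec d)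
    (U0 : ℝ → Vec d) (r : ℝ) (k : ℕ) (μ : ℕ → ℝ) (β : ℝ) (p : ℕ) (t n : ℤ)
    (Φ : Fin (q + 1) → ℤ → Vec d) : Fin (q + 1) → ℤ → Vec d :=
  fun ζ l => c0 • DkHstar q k μ β ((p : ℝ) / q) Φ ζ l - ΔMop q hq τ α t n Φ ζ l
    - (DUG G (U0 (((l * (q : ℤ) + ((ζ : ℕ) : ℤ) : ℤ) : ℝ) / p)) r).transpose.mulVec (Φ ζ l)

/-- Sampling of a continuum function into `ℋ_M`: `[π_{ℋ_M}f](ζ,ξ) = f(ξ + ζM⁻¹)`. -/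
def piH {d : ℕ} (q p : ℕ) (f : ℝ → Vec d) : Fin (q + 1) → ℤ → Vec d :=
  fun ζ l => f (((l * (q : ℤ) + ((ζ : ℕ) : ℤ) : ℤ) : ℝ) / p)

/-- The twist datum `t = θ(M)·q ∈ {1,…,q}` associated with `M = p/q`. -/
def tOf (q p : ℕ) : ℤ := if p % q = 0 then (q : ℤ) else ((p % q : ℕ) : ℤ)

/-- The integer `n(M)` with `1 = (n + θ)M⁻¹`, i.e. `p = n q + t`. -/
def nOf (q p : ℕ) : ℤ := ((p : ℤ) - tOf q p) / (q : ℤ)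

/-! ### The limiting operators on `H¹(ℝ, ℓ²_{q,⊥;∞})` -/

/-- Periodic extension in `ζ` of a function `Θ(ζ,ξ)` using the convention
`Θ(ζ+1,ξ) = Θ(ζ,ξ)`. -/
def extPer {d : ℕ} (q : ℕ) (hq : 0 < q) (Θ : Fin (q + 1) → ℝ → Vec d) : ℤ → ℝ → Vec d :=
  fun j ξ => Θ (zmodIdx q hq j) ξ

/-- Complex version of `extPer`. -/
def extPerC {d : ℕ} (q : ℕ) (hq : 0 < q) (Θ : Fin (q + 1) → ℝ → VecC d) : ℤ → ℝ → VecC d :=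
  fun j ξ => Θ (zmodIdx q hq j) ξ

/-- The operator `Δ_{q,θ}` with twist datum `t = θ q`. -/
def ΔQθ {d : ℕ} (q : ℕ) (hq : 0 < q) (τ : ℝ) (α : ℕ → Vec d) (t : ℤ)
    (Θ : Fin (q + 1) → ℝ → Vec d) : Fin (q + 1) → ℝ → Vec d :=
  fun ζ ξ i => τ * ∑' m : ℕ, α (m + 1) i *
    (extPer q hq Θ (((ζ : ℕ) : ℤ) + ((m : ℤ) + 1) * t) (ξ + ((m : ℝ) + 1)) i
      + extPer q hq Θ (((ζ : ℕ) : ℤ) - ((m : ℤ) + 1) * t) (ξ - ((m : ℝ) + 1)) i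
      - 2 * Θ ζ ξ i)

/-- Complex version of `Δ_{q,θ}`. -/
def ΔQθC {d : ℕ} (q : ℕ) (hq : 0 < q) (τ : ℝ) (α : ℕ → Vec d) (t : ℤ)
    (Θ : Fin (q + 1) → ℝ → VecC d) : Fin (q + 1) → ℝ → VecC d :=
  fun ζ ξ i => (τ : ℂ) * ∑' m : ℕ, ((α (m + 1) i : ℝ) : ℂ) *
    (extPerC q hq Θ (((ζ : ℕ) : ℤ) + ((m : ℤ) + 1) * t) (ξ + ((m : ℝ) + 1)) i
      + extPerC q hq Θ (((ζ : ℕ) : ℤ) - ((m : ℤ) + 1) * t) (ξ - ((m : ℝ) + 1)) i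
      - 2 * Θ ζ ξ i)

/-- The limiting operator `𝒦̄_{q,θ} Θ = c̄₀ ∂_ξ Θ − Δ_{q,θ} Θ − D_U G(Ū₀(ξ); r̄) Θ`,
evaluated on a pair `(Θ, Θ')`. -/
def Kbar {d : ℕ} (q : ℕ) (hq : 0 < q) (τ c0 : ℝ) (α : ℕ → Vec d) (G : Vec d → ℝ → Vec d)
    (U0 : ℝ → Vec d) (r : ℝ) (t : ℤ) (Θ Θ' : Fin (q + 1) → ℝ → Vec d) :
    Fin (q + 1) → ℝ → Vec d :=
  fun ζ ξ => c0 • Θ' ζ ξ - ΔQθ q hq τ α t Θ ζ ξ - (DUG G (U0 ξ) r).mulVec (Θ ζ ξ)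

/-- The formal adjoint `𝒦̄*_{q,θ}`. -/
def KbarStar {d : ℕ} (q : ℕ) (hq : 0 < q) (τ c0 : ℝ) (α : ℕ → Vec d)
    (G : Vec d → ℝ → Vec d) (U0 : ℝ → Vec d) (r : ℝ) (t : ℤ)
    (Θ Θ' : Fin (q + 1) → ℝ → Vec d) : Fin (q + 1) → ℝ → Vec d :=
  fun ζ ξ => (-c0) • Θ' ζ ξ - ΔQθ q hq τ α t Θ ζ ξ
    - (DUG G (U0 ξ) r).transpose.mulVec (Θ ζ ξ)

/-- Complexification of `𝒦̄_{q,θ} + λ`. -/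
def KbarC {d : ℕ} (q : ℕ) (hq : 0 < q) (τ c0 : ℝ) (α : ℕ → Vec d) (G : Vec d → ℝ → Vec d)
    (U0 : ℝ → Vec d) (r : ℝ) (t : ℤ) (lam : ℂ) (Θ Θ' : Fin (q + 1) → ℝ → VecC d) :
    Fin (q + 1) → ℝ → VecC d :=
  fun ζ ξ i => (c0 : ℂ) * Θ' ζ ξ i - ΔQθC q hq τ α t Θ ζ ξ i
    - ∑ j, ((DUG G (U0 ξ) r i j : ℝ) : ℂ) * Θ ζ ξ j + lam * Θ ζ ξ i

/-- Membership of a pair `(Θ, Θ')` in `H¹(ℝ, ℓ²_{q,⊥;∞})`. -/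
def IsH1perp {d : ℕ} (q : ℕ) (Θ Θ' : Fin (q + 1) → ℝ → Vec d) : Prop :=
  (∀ ζ, IsH1 (Θ ζ) (Θ' ζ)) ∧ (∀ ξ : ℝ, Θ (Fin.last q) ξ = Θ 0 ξ) ∧
    (∀ ξ : ℝ, Θ' (Fin.last q) ξ = Θ' 0 ξ)

/-- Complex version of `IsH1perp`. -/
def IsH1perpC {d : ℕ} (q : ℕ) (Θ Θ' : Fin (q + 1) → ℝ → VecC d) : Prop :=
  (∀ ζ, IsH1C (Θ ζ) (Θ' ζ)) ∧ (∀ ξ : ℝ, Θ (Fin.last q) ξ = Θ 0 ξ) ∧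
    (∀ ξ : ℝ, Θ' (Fin.last q) ξ = Θ' 0 ξ)

/-- Membership of `Θ` in `L²(ℝ, ℓ²_{q,⊥;∞})`. -/
def MemL2perp {d : ℕ} (q : ℕ) (Θ : Fin (q + 1) → ℝ → Vec d) : Prop :=
  (∀ ζ, MemLp (Θ ζ) 2 (volume : Measure ℝ)) ∧ (∀ ξ : ℝ, Θ (Fin.last q) ξ = Θ 0 ξ)

/-- The `L²(ℝ, ℓ²_{q,⊥})` pairing. -/
def innerL2perp {d : ℕ} (q : ℕ) (Θ Ψ : Fin (q + 1) → ℝ → Vec d) : ℝ :=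
  ∫ ξ : ℝ, innerPerp q (fun ζ => Θ ζ ξ) (fun ζ => Ψ ζ ξ)

/-- The `H¹(ℝ, ℓ²_{q,⊥})` norm of a pair `(Θ, Θ')`. -/
def normH1perp {d : ℕ} (q : ℕ) (Θ Θ' : Fin (q + 1) → ℝ → Vec d) : ℝ :=
  Real.sqrt (innerL2perp q Θ Θ + innerL2perp q Θ' Θ')

/-- The `L²(ℝ, ℓ²_{q,⊥})` norm. -/
def normL2perp {d : ℕ} (q : ℕ) (Θ : Fin (q + 1) → ℝ → Vec d) : ℝ :=
  Real.sqrt (innerL2perp q Θ Θ)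

/-- The embedding `[π_⊥ f](ζ, ξ) = f(ξ)`. -/
def piPerp {d : ℕ} (q : ℕ) (f : ℝ → Vec d) : Fin (q + 1) → ℝ → Vec d := fun _ ξ => f ξ

/-! ### Characteristic matrices and operators -/

/-- `A(y)`: diagonal entries `A_i(y) = Σ_{m>0} α_m^{(i,i)}(1 − cos(my))`. -/
def Afun {d : ℕ} (α : ℕ → Vec d) (y : ℝ) : Fin d → ℝ :=
  fun i => ∑' m : ℕ, α (m + 1) i * (1 - Real.cos (((m : ℝ) + 1) * y))

/-- The averaged Jacobian `DG_ρ = ρ D_U G(P⁻; r̄) + (1−ρ) D_U G(P⁺; r̄)`. -/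
def DGrho {d : ℕ} (G : Vec d → ℝ → Vec d) (Pm Pp : Vec d) (r ρ : ℝ) :
    Matrix (Fin d) (Fin d) ℝ :=
  ρ • DUG G Pm r + (1 - ρ) • DUG G Pp r

/-- The characteristic matrix `Δ_{ρ;λ}(iy) = c̄₀ i y I + 2τ A(y) − DG_ρ + λ I`. -/
def charMat {d : ℕ} (τ c0 : ℝ) (α : ℕ → Vec d) (G : Vec d → ℝ → Vec d) (Pm Pp : Vec d)
    (r ρ y : ℝ) (lam : ℂ) : Matrix (Fin d) (Fin d) ℂ :=
  fun i j => (if i = j then (c0 : ℂ) * (y : ℂ) * Complex.I + lam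
      + 2 * (τ : ℂ) * ((Afun α y i : ℝ) : ℂ) else 0)
    - ((DGrho G Pm Pp r ρ i j : ℝ) : ℂ)

/-- Periodic extension of an element of (the complexification of) `ℓ²_{q,⊥;∞}`. -/
def extFinC {d : ℕ} (q : ℕ) (hq : 0 < q) (V : Fin (q + 1) → VecC d) : ℤ → VecC d :=
  fun j => V (zmodIdx q hq j)

/-- The characteristic operator `Δ_{q,θ,ρ;λ}(iy)` on the complexification of `ℓ²_{q,⊥;∞}`,
with twist datum `t = θq`. -/
def charOp {d : ℕ} (q : ℕ) (hq : 0 < q) (τ c0 : ℝ) (α : ℕ → Vec d)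
    (G : Vec d → ℝ → Vec d) (Pm Pp : Vec d) (r ρ : ℝ) (t : ℤ) (y : ℝ) (lam : ℂ)
    (V : Fin (q + 1) → VecC d) : Fin (q + 1) → VecC d :=
  fun ζ i => ((c0 : ℂ) * (y : ℂ) * Complex.I + lam) * V ζ i
    - (τ : ℂ) * ∑' m : ℕ, ((α (m + 1) i : ℝ) : ℂ) *
        (Complex.exp (Complex.I * ((m : ℝ) + 1) * y) *
            extFinC q hq V (((ζ : ℕ) : ℤ) + ((m : ℤ) + 1) * t) i
          + Complex.exp (-(Complex.I * ((m : ℝ) + 1) * y)) *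
            extFinC q hq V (((ζ : ℕ) : ℤ) - ((m : ℤ) + 1) * t) i
          - 2 * V ζ i)
    - ∑ j, ((DGrho G Pm Pp r ρ i j : ℝ) : ℂ) * V ζ j

/-! ### Interpolation operators -/

/-- The order-zero interpolation `ℐ⁰_M`. -/
def I0interp {d : ℕ} (q : ℕ) (M : ℝ) (Φ : Fin (q + 1) → ℤ → Vec d) :
    Fin (q + 1) → ℝ → Vec d :=
  fun ζ ξ => Φ ζ ⌊M * ξ⌋

/-- The order-one (piecewise linear) interpolation `ℐ¹_{k,M}`. -/
def I1interp {d : ℕ} (q : ℕ) (M : ℝ) (Φ : Fin (q + 1) → ℤ → Vec d) :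
    Fin (q + 1) → ℝ → Vec d :=
  fun ζ ξ => M • ((ξ - (⌊M * ξ⌋ : ℝ) / M) • Φ ζ (⌊M * ξ⌋ + 1)
    + (((⌊M * ξ⌋ : ℝ) + 1) / M - ξ) • Φ ζ ⌊M * ξ⌋)

/-- The a.e. derivative of the piecewise linear interpolation. -/
def I1deriv {d : ℕ} (q : ℕ) (M : ℝ) (Φ : Fin (q + 1) → ℤ → Vec d) :
    Fin (q + 1) → ℝ → Vec d :=
  fun ζ ξ => M • (Φ ζ (⌊M * ξ⌋ + 1) - Φ ζ ⌊M * ξ⌋)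

/-! ### `Δ_M` acting on continuum functions (for the convergence lemma) -/

/-- Extension of a continuum function `Θ(ζ,ξ)` via the convention
`Θ(ζ±1,ξ) = Θ(ζ, ξ±M⁻¹)`, where `Minv = M⁻¹`. -/
def extContM {d : ℕ} (q : ℕ) (hq : 0 < q) (Minv : ℝ) (Θ : Fin (q + 1) → ℝ → Vec d) :
    ℤ → ℝ → Vec d :=
  fun j ξ => Θ (zmodIdx q hq j) (ξ + ((j / (q : ℤ) : ℤ) : ℝ) * Minv)

/-- The operator `Δ_M` acting on continuum functions of `(ζ, ξ)`, with twist data `(t, n)`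
and `Minv = M⁻¹`. -/
def ΔMcont {d : ℕ} (q : ℕ) (hq : 0 < q) (τ : ℝ) (α : ℕ → Vec d) (t n : ℤ) (Minv : ℝ)
    (Θ : Fin (q + 1) → ℝ → Vec d) : Fin (q + 1) → ℝ → Vec d :=
  fun ζ ξ i => τ * ∑' m : ℕ, α (m + 1) i *
    (extContM q hq Minv Θ (((ζ : ℕ) : ℤ) + ((m : ℤ) + 1) * t)
        (ξ + ((m : ℝ) + 1) * (n : ℝ) * Minv) i
      + extContM q hq Minv Θ (((ζ : ℕ) : ℤ) - ((m : ℤ) + 1) * t)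
        (ξ - ((m : ℝ) + 1) * (n : ℝ) * Minv) i
      - 2 * Θ ζ ξ i)

/-! ### The quantities `ℰ_{k,M}(δ)`, `κ(δ)` and the resolvent bound -/

/-- The quantity `ℰ_{k,M}(δ)` from the spectral convergence method. -/
def EkM {d : ℕ} (q : ℕ) (hq : 0 < q) (τ c0 : ℝ) (α : ℕ → Vec d) (G : Vec d → ℝ → Vec d)
    (U0 : ℝ → Vec d) (r : ℝ) (k : ℕ) (μ : ℕ → ℝ) (β : ℝ) (Φm : ℝ → Vec d)
    (p : ℕ) (δ : ℝ) : ℝ :=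
  sInf { x : ℝ | ∃ Φ : Fin (q + 1) → ℤ → Vec d, HConstraint q Φ ∧ MemH q Φ ∧
    normH1 q k μ β ((p : ℝ) / q) Φ = 1 ∧
    x = normH q ((p : ℝ) / q)
          (fun ζ l => KkM q hq τ c0 α G U0 r k μ β p (tOf q p) (nOf q p) Φ ζ l + δ • Φ ζ l)
      + δ⁻¹ * |innerH q ((p : ℝ) / q) (piH q p Φm)
          (fun ζ l => KkM q hq τ c0 α G U0 r k μ β p (tOf q p) (nOf q p) Φ ζ l + δ • Φ ζ l)| }

/-- The quantity `ℰ*_{k,M}(δ)`, defined analogously with `𝒦*_{k,M}` and `Φ₀⁺`. -/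
def EkMstar {d : ℕ} (q : ℕ) (hq : 0 < q) (τ c0 : ℝ) (α : ℕ → Vec d) (G : Vec d → ℝ → Vec d)
    (U0 : ℝ → Vec d) (r : ℝ) (k : ℕ) (μ : ℕ → ℝ) (β : ℝ) (Φp : ℝ → Vec d)
    (p : ℕ) (δ : ℝ) : ℝ :=
  sInf { x : ℝ | ∃ Φ : Fin (q + 1) → ℤ → Vec d, HConstraint q Φ ∧ MemH q Φ ∧
    normH1 q k μ β ((p : ℝ) / q) Φ = 1 ∧
    x = normH q ((p : ℝ) / q)
          (fun ζ l => KkMstar q hq τ c0 α G U0 r k μ β p (tOf q p) (nOf q p) Φ ζ l + δ • Φ ζ l)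
      + δ⁻¹ * |innerH q ((p : ℝ) / q) (piH q p Φp)
          (fun ζ l => KkMstar q hq τ c0 α G U0 r k μ β p (tOf q p) (nOf q p) Φ ζ l + δ • Φ ζ l)| }

/-- `κ(δ) = liminf_{M → ∞, M ∈ ℳ_q} ℰ_{k,M}(δ)`. -/
def kappaE {d : ℕ} (q : ℕ) (hq : 0 < q) (τ c0 : ℝ) (α : ℕ → Vec d) (G : Vec d → ℝ → Vec d)
    (U0 : ℝ → Vec d) (r : ℝ) (k : ℕ) (μ : ℕ → ℝ) (β : ℝ) (Φm : ℝ → Vec d) (δ : ℝ) : ℝ :=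
  Filter.liminf (fun p : ℕ => EkM q hq τ c0 α G U0 r k μ β Φm p δ)
    (Filter.atTop ⊓ Filter.principal {p : ℕ | Nat.Coprime p q ∧ q ≤ p})

/-- `κ*(δ) = liminf_{M → ∞, M ∈ ℳ_q} ℰ*_{k,M}(δ)`. -/
def kappaEstar {d : ℕ} (q : ℕ) (hq : 0 < q) (τ c0 : ℝ) (α : ℕ → Vec d)
    (G : Vec d → ℝ → Vec d) (U0 : ℝ → Vec d) (r : ℝ) (k : ℕ) (μ : ℕ → ℝ) (β : ℝ)
    (Φp : ℝ → Vec d) (δ : ℝ) : ℝ :=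
  Filter.liminf (fun p : ℕ => EkMstar q hq τ c0 α G U0 r k μ β Φp p δ)
    (Filter.atTop ⊓ Filter.principal {p : ℕ | Nat.Coprime p q ∧ q ≤ p})

/-- The resolvent bound for the limiting operator `𝒦̄_{q,θ}` (with twist datum `t = θq`):
for `0 < δ < δ0`, `𝒦̄_{q,θ} + δ` is surjective onto `L²(ℝ,ℓ²_{q,⊥;∞})` and every solution
obeys the `H¹` estimate with constant `C`. -/
def ResolventBound {d : ℕ} (q : ℕ) (hq : 0 < q) (τ c0 : ℝ) (α : ℕ → Vec d)
    (G : Vec d → ℝ → Vec d) (U0 : ℝ → Vec d) (r : ℝ) (t : ℤ) (Φm : ℝ → Vec d)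
    (C δ0 : ℝ) : Prop :=
  ∀ δ : ℝ, 0 < δ → δ < δ0 →
    (∀ Θ : Fin (q + 1) → ℝ → Vec d, MemL2perp q Θ →
      ∃ Φ Φ' : Fin (q + 1) → ℝ → Vec d, IsH1perp q Φ Φ' ∧
        ∀ᵐ ξ ∂(volume : Measure ℝ), ∀ ζ,
          Kbar q hq τ c0 α G U0 r t Φ Φ' ζ ξ + δ • Φ ζ ξ = Θ ζ ξ) ∧
    (∀ Θ Φ Φ' : Fin (q + 1) → ℝ → Vec d, MemL2perp q Θ → IsH1perp q Φ Φ' →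
      (∀ᵐ ξ ∂(volume : Measure ℝ), ∀ ζ,
          Kbar q hq τ c0 α G U0 r t Φ Φ' ζ ξ + δ • Φ ζ ξ = Θ ζ ξ) →
      normH1perp q Φ Φ' ≤ C * (normL2perp q Θ + δ⁻¹ * |innerL2perp q Θ (piPerp q Φm)|))

/-- The second derivative `D²G(U;r)[a,b]` of the nonlinearity. -/
def D2G {d : ℕ} (G : Vec d → ℝ → Vec d) (U : Vec d) (r : ℝ) (a b : Vec d) : Vec d :=
  fun i => fderiv ℝ (fun V => fderiv ℝ (fun W => G W r i) V a) U b

/-- The quasi-inverse `L₀^{qinv} G = L₀⁻¹[G − (⟨Φ₀⁻,G⟩/⟨Φ₀⁻,Φ₀⁺⟩) Φ₀⁺]`, built from a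
given inverse `Linv` of the restriction `L₀ : X₀ → Y₀`. -/
def qinvOf {d : ℕ} (Linv : (ℝ → Vec d) → (ℝ → Vec d)) (Φp Φm : ℝ → Vec d)
    (Gf : ℝ → Vec d) : ℝ → Vec d :=
  Linv (fun ξ => Gf ξ - (innerL2 Φm Gf / innerL2 Φm Φp) • Φp ξ)

/-! If `v = a + i b` lies in the kernel of `Δ_{ρ;λ}(iy)`, the real part of `⟨v, Δ_{ρ;λ}(iy) v⟩`
gives `∑ᵢ (Re λ + 2τ Aᵢ(y)) |vᵢ|² = aᵀ DG_ρ a + bᵀ DG_ρ b`. Each `Aᵢ` is nonnegative, and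
`-DG_ρ`, a convex combination of two positive definite matrices, is coercive with a constant
`κ > 0` independent of `ρ ∈ [0,1]`; hence `v = 0` as soon as `Re λ > -κ`, and `λ* = κ` works. -/

open Matrix

lemma dotV_self_pos {d : ℕ} {x : Vec d} (hx : x ≠ 0) : 0 < dotV x x := by
  obtain ⟨i, hi⟩ := Function.ne_iff.mp hx
  exact Finset.sum_pos' (fun j _ => mul_self_nonneg (x j))
    ⟨i, Finset.mem_univ i, mul_self_pos.mpr hi⟩

lemma dotV_smul_smul {d : ℕ} (c : ℝ) (x y : Vec d) :
    dotV (c • x) (c • y) = c ^ 2 * dotV x y := by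
  simp only [dotV, Pi.smul_apply, smul_eq_mul, Finset.mul_sum]
  exact Finset.sum_congr rfl fun i _ => by ring

lemma dotV_neg_right {d : ℕ} (x y : Vec d) : dotV x (-y) = -dotV x y := by
  simp [dotV]

lemma dotV_add_smul_mulVec {d : ℕ} (A B : Matrix (Fin d) (Fin d) ℝ) (a b : ℝ) (x : Vec d) :
    dotV x ((a • A + b • B) *ᵥ x) = a * dotV x (A *ᵥ x) + b * dotV x (B *ᵥ x) := by
  simp only [dotV, add_mulVec, smul_mulVec, Pi.add_apply, Pi.smul_apply, smul_eq_mul,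
    Finset.mul_sum, ← Finset.sum_add_distrib]
  exact Finset.sum_congr rfl fun i _ => by ring

lemma continuous_dotV {d : ℕ} {f g : Vec d → Vec d} (hf : Continuous f) (hg : Continuous g) :
    Continuous fun x => dotV (f x) (g x) := by
  unfold dotV
  fun_prop

-- The Rayleigh quotient attains a positive minimum on the compact unit sphere.
lemma PosDefQ.exists_pos_mul_dotV_le {d : ℕ} {M : Matrix (Fin d) (Fin d) ℝ} (hM : PosDefQ M) :
    ∃ κ : ℝ, 0 < κ ∧ ∀ x : Vec d, κ * dotV x x ≤ dotV x (M *ᵥ x) := by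
  set S := Metric.sphere (0 : Vec d) 1
  have hS_ne : ∀ u ∈ S, u ≠ 0 := fun u hu h => by simp [S, h] at hu
  obtain ⟨κ, hκ, hκS⟩ : ∃ κ : ℝ, 0 < κ ∧ ∀ u ∈ S, κ * dotV u u ≤ dotV u (M *ᵥ u) := by
    rcases S.eq_empty_or_nonempty with hS | hS
    · exact ⟨1, one_pos, by simp [hS]⟩
    have hcont : ContinuousOn (fun u => dotV u (M *ᵥ u) / dotV u u) S :=
      (continuous_dotV continuous_id M.mulVecLin.continuous_of_finiteDimensional).continuousOn.div
        (continuous_dotV continuous_id continuous_id).continuousOn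
        fun u hu => (dotV_self_pos (hS_ne u hu)).ne'
    obtain ⟨u₀, hu₀, hmin⟩ := (isCompact_sphere (0 : Vec d) 1).exists_isMinOn hS hcont
    refine ⟨_, div_pos (hM u₀ (hS_ne u₀ hu₀)) (dotV_self_pos (hS_ne u₀ hu₀)), fun u hu => ?_⟩
    exact (le_div_iff₀ (dotV_self_pos (hS_ne u hu))).mp (hmin hu)
  refine ⟨κ, hκ, fun x => ?_⟩
  rcases eq_or_ne x 0 with rfl | hx
  · simp [dotV]
  have hnx : ‖x‖ ≠ 0 := norm_ne_zero_iff.mpr hx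
  have hu : ‖x‖⁻¹ • x ∈ S := by simp [S, norm_smul, hnx]
  have hxu : ‖x‖ • ‖x‖⁻¹ • x = x := by rw [smul_smul, mul_inv_cancel₀ hnx, one_smul]
  have h := mul_le_mul_of_nonneg_left (hκS _ hu) (sq_nonneg ‖x‖)
  rwa [mul_left_comm, ← dotV_smul_smul, ← dotV_smul_smul, ← mulVec_smul, hxu] at h

lemma HS3a.exists_dotV_DGrho_le {d : ℕ} {G : Vec d → ℝ → Vec d} {Pm Pp : Vec d} {r : ℝ}
    (h : HS3a G Pm Pp r) :
    ∃ κ : ℝ, 0 < κ ∧ ∀ ρ ∈ Set.Icc (0 : ℝ) 1, ∀ x : Vec d,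
      dotV x (DGrho G Pm Pp r ρ *ᵥ x) ≤ -κ * dotV x x := by
  obtain ⟨κ₁, hκ₁, h₁⟩ := h.1.exists_pos_mul_dotV_le
  obtain ⟨κ₂, hκ₂, h₂⟩ := h.2.exists_pos_mul_dotV_le
  refine ⟨min κ₁ κ₂, lt_min hκ₁ hκ₂, fun ρ ⟨hρ₀, hρ₁⟩ x => ?_⟩
  have hneg : -DGrho G Pm Pp r ρ = ρ • -DUG G Pm r + (1 - ρ) • -DUG G Pp r := by
    simp only [DGrho, smul_neg, neg_add]
  have hsplit := dotV_add_smul_mulVec (-DUG G Pm r) (-DUG G Pp r) ρ (1 - ρ) x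
  rw [← hneg, neg_mulVec, dotV_neg_right] at hsplit
  have hxx : 0 ≤ dotV x x := Finset.sum_nonneg fun i _ => mul_self_nonneg (x i)
  have hmin : min κ₁ κ₂ * dotV x x ≤ ρ * (κ₁ * dotV x x) + (1 - ρ) * (κ₂ * dotV x x) := by
    nlinarith [mul_nonneg (mul_nonneg (sub_nonneg.mpr (min_le_left κ₁ κ₂)) hρ₀) hxx,
      mul_nonneg (mul_nonneg (sub_nonneg.mpr (min_le_right κ₁ κ₂)) (sub_nonneg.mpr hρ₁)) hxx]
  nlinarith [mul_le_mul_of_nonneg_left (h₁ x) hρ₀,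
    mul_le_mul_of_nonneg_left (h₂ x) (sub_nonneg.mpr hρ₁)]

lemma Afun_periodic {d : ℕ} (α : ℕ → Vec d) : Function.Periodic (Afun α) (2 * Real.pi) := by
  intro y
  funext i
  refine tsum_congr fun m => ?_
  have hshift : ((m : ℝ) + 1) * (y + 2 * Real.pi)
      = ((m : ℝ) + 1) * y + (m + 1 : ℕ) * (2 * Real.pi) := by
    push_cast
    ring
  rw [hshift, Real.cos_add_nat_mul_two_pi]

lemma HS1.Afun_nonneg {d ddiff : ℕ} {τ ν : ℝ} {α : ℕ → Vec d} (h : HS1 d ddiff τ α ν)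
    (y : ℝ) (i : Fin d) : 0 ≤ Afun α y i := by
  obtain ⟨y₀, ⟨hy₀, hy₀'⟩, hy⟩ := (Afun_periodic α).exists_mem_Ico₀ Real.two_pi_pos y
  rw [hy]
  by_cases hi : (i : ℕ) < ddiff
  · rcases hy₀.eq_or_lt with rfl | hpos
    · simp [Afun]
    · exact (h.A_pos i hi y₀ hpos hy₀').le
  · simp [Afun, h.nondiff_zero i (not_lt.mp hi)]

lemma re_star_dotProduct_diagonal_mulVec {d : ℕ} (D v : Fin d → ℂ) :
    (star v ⬝ᵥ (diagonal D *ᵥ v)).re = ∑ i, (D i).re * Complex.normSq (v i) := by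
  simp only [mulVec_diagonal, dotProduct, Complex.re_sum]
  refine Finset.sum_congr rfl fun i _ => ?_
  simp only [Pi.star_apply, RCLike.star_def, Complex.mul_re, Complex.conj_re, Complex.conj_im,
    Complex.mul_im, neg_mul, sub_neg_eq_add, Complex.normSq_apply]
  ring

lemma re_star_dotProduct_map_ofReal_mulVec {d : ℕ} (C : Matrix (Fin d) (Fin d) ℝ)
    (v : Fin d → ℂ) :
    (star v ⬝ᵥ (C.map ((↑) : ℝ → ℂ) *ᵥ v)).re
      = dotV (fun i => (v i).re) (C *ᵥ fun i => (v i).re)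
        + dotV (fun i => (v i).im) (C *ᵥ fun i => (v i).im) := by
  simp only [dotV, mulVec, dotProduct, Complex.re_sum, Finset.mul_sum, ← Finset.sum_add_distrib]
  refine Finset.sum_congr rfl fun i _ => Finset.sum_congr rfl fun j _ => ?_
  simp [Complex.mul_re, Complex.mul_im]

theorem det_diagonal_sub_map_ofReal_ne_zero {d : ℕ} {D : Fin d → ℂ}
    {C : Matrix (Fin d) (Fin d) ℝ} {κ : ℝ} (hC : ∀ x : Vec d, dotV x (C *ᵥ x) ≤ -κ * dotV x x)
    (hD : ∀ i, -κ < (D i).re) : (diagonal D - C.map ((↑) : ℝ → ℂ)).det ≠ 0 := by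
  intro hdet
  obtain ⟨v, hv, hker⟩ := exists_mulVec_eq_zero_iff.mpr hdet
  have hquad := congrArg (fun w => (star v ⬝ᵥ w).re) hker
  simp only [sub_mulVec, dotProduct_sub, Complex.sub_re, re_star_dotProduct_diagonal_mulVec,
    re_star_dotProduct_map_ofReal_mulVec, dotProduct_zero, Complex.zero_re] at hquad
  have hnormSq : ∑ i, Complex.normSq (v i)
      = dotV (fun i => (v i).re) (fun i => (v i).re)
        + dotV (fun i => (v i).im) (fun i => (v i).im) := by
    simp only [dotV, Complex.normSq_apply, Finset.sum_add_distrib]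
  obtain ⟨i, hi⟩ := Function.ne_iff.mp hv
  have hpos : 0 < ∑ i, ((D i).re + κ) * Complex.normSq (v i) :=
    Finset.sum_pos' (fun j _ => mul_nonneg (by linarith [hD j]) (Complex.normSq_nonneg _))
      ⟨i, Finset.mem_univ i, mul_pos (by linarith [hD i]) (Complex.normSq_pos.mpr hi)⟩
  simp only [add_mul, Finset.sum_add_distrib, ← Finset.mul_sum, hnormSq] at hpos
  linarith [hC fun i => (v i).re, hC fun i => (v i).im]

lemma charMat_eq {d : ℕ} (τ c0 : ℝ) (α : ℕ → Vec d) (G : Vec d → ℝ → Vec d) (Pm Pp : Vec d)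
    (r ρ y : ℝ) (lam : ℂ) :
    charMat τ c0 α G Pm Pp r ρ y lam
      = diagonal (fun i => (c0 : ℂ) * y * Complex.I + lam + 2 * τ * (Afun α y i : ℂ))
        - (DGrho G Pm Pp r ρ).map ((↑) : ℝ → ℂ) := by
  ext i j
  simp [charMat, diagonal_apply]

theorem statement_3_general
    {d ddiff : ℕ} {τ ν : ℝ} {α : ℕ → Vec d} {G : Vec d → ℝ → Vec d} {Pm Pp : Vec d}
    {rbar c0 : ℝ}
    (hHS1 : HS1 d ddiff τ α ν)
    (hHS3a : HS3a G Pm Pp rbar) :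
    ∃ lamStar : ℝ, 0 < lamStar ∧
      ∀ lam : ℂ, -lamStar < lam.re → ∀ ρ ∈ Set.Icc (0 : ℝ) 1, ∀ y : ℝ,
        (charMat τ c0 α G Pm Pp rbar ρ y lam).det ≠ 0 := by
  obtain ⟨κ, hκ, hDG⟩ := hHS3a.exists_dotV_DGrho_le
  refine ⟨κ, hκ, fun lam hlam ρ hρ y => ?_⟩
  rw [charMat_eq]
  refine det_diagonal_sub_map_ofReal_ne_zero (hDG ρ hρ) fun i => ?_
  have hdiff : 0 ≤ 2 * τ * Afun α y i :=
    mul_nonneg (by linarith [hHS1.τ_pos]) (hHS1.Afun_nonneg y i)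
  simpa using lt_add_of_lt_of_nonneg hlam hdiff

/-- Under (HS1), (HS2) and alternative (a) of (HS3_r̄), there is `λ* > 0`
such that `det Δ_{ρ;λ}(iy) ≠ 0` whenever `Re λ > −λ*`, `ρ ∈ [0,1]` and `y ∈ ℝ`. -/
theorem statement_3
    {d ddiff : ℕ} {τ ν : ℝ} {α : ℕ → Vec d} {G : Vec d → ℝ → Vec d} {Pm Pp : Vec d}
    {rbar c0 : ℝ}
    (hHS1 : HS1 d ddiff τ α ν) (hHS2 : HS2 d G Pm Pp)
    (hrbar : rbar ∈ Set.Ioo (0 : ℝ) 1) (hc0 : c0 ≠ 0)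
    (hHS3a : HS3a G Pm Pp rbar) :
    ∃ lamStar : ℝ, 0 < lamStar ∧
      ∀ lam : ℂ, -lamStar < lam.re → ∀ ρ ∈ Set.Icc (0 : ℝ) 1, ∀ y : ℝ,
        (charMat τ c0 α G Pm Pp rbar ρ y lam).det ≠ 0 :=
  statement_3_general hHS1 hHS3a
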